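/- arXiv:0906.0107 — 5 statements merged into one kernel-verified Lean document; each statement's English description precedes it below -/
import Mathlib

section
/- The function v₁(t) = ∫_ℝ dτ / √((1+τ²)(1+(t-τ)²)) is well-defined (the integral converges) for every real t, and v₁(t) ≤ v₁(0) = π for all t ≥ 0. -/
open MeasureTheory

noncomputable def v1 (t : ℝ) : ℝ :=
  ∫ τ : ℝ, (Real.sqrt ((1 + τ ^ 2) * (1 + (t - τ) ^ 2)))⁻¹

/-! The integrand is `√(k τ · k (t - τ))` with `k x = (1 + x²)⁻¹`, so it is dominated by
`(k τ + k (t - τ)) / 2` (AM–GM), and by Cauchy–Schwarz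
`v₁(t) ≤ ‖k‖₁^{1/2} ‖k (t - ·)‖₁^{1/2} = π`, with equality at `t = 0`,
where the integrand is `k` itself and `∫ k = π`. -/

theorem Real.sqrt_mul_le_add_div_two {a b : ℝ} (ha : 0 ≤ a) (hb : 0 ≤ b) :
    √(a * b) ≤ (a + b) / 2 :=
  Real.sqrt_le_iff.mpr ⟨by positivity, by nlinarith [sq_nonneg (a - b)]⟩

section CauchySchwarz

variable {α : Type*} [MeasurableSpace α] {μ : Measure α} {f g : α → ℝ}

theorem MeasureTheory.Integrable.sqrt_mul (hf : Integrable f μ) (hg : Integrable g μ) :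
    Integrable (fun x => √(f x * g x)) μ := by
  refine ((hf.abs.add hg.abs).div_const 2).mono'
    (Real.continuous_sqrt.comp_aestronglyMeasurable (hf.1.mul hg.1)) (ae_of_all _ fun x => ?_)
  rw [Real.norm_of_nonneg (Real.sqrt_nonneg _)]
  calc √(f x * g x) ≤ √(|f x| * |g x|) := Real.sqrt_le_sqrt (abs_mul (f x) (g x) ▸ le_abs_self _)
    _ ≤ (|f x| + |g x|) / 2 := Real.sqrt_mul_le_add_div_two (abs_nonneg _) (abs_nonneg _)

theorem MeasureTheory.Integrable.memLp_two_sqrt (hf : Integrable f μ) (hf0 : 0 ≤ᵐ[μ] f) :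
    MemLp (fun x => √(f x)) 2 μ := by
  refine (memLp_two_iff_integrable_sq
    (Real.continuous_sqrt.comp_aestronglyMeasurable hf.1)).mpr (hf.congr ?_)
  filter_upwards [hf0] with x hx
  rw [Real.sq_sqrt hx]

theorem MeasureTheory.integral_sqrt_mul_le (hf : Integrable f μ) (hg : Integrable g μ)
    (hf0 : 0 ≤ᵐ[μ] f) (hg0 : 0 ≤ᵐ[μ] g) :
    ∫ x, √(f x * g x) ∂μ ≤ √(∫ x, f x ∂μ) * √(∫ x, g x ∂μ) := by
  have integral_sqrt_sq {h : α → ℝ} (h0 : 0 ≤ᵐ[μ] h) :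
      ∫ x, √(h x) ^ (2 : ℝ) ∂μ = ∫ x, h x ∂μ := by
    refine integral_congr_ae ?_
    filter_upwards [h0] with x hx
    rw [Real.rpow_two, Real.sq_sqrt hx]
  have holder := integral_mul_le_Lp_mul_Lq_of_nonneg Real.HolderConjugate.two_two
    (ae_of_all _ fun x => Real.sqrt_nonneg (f x)) (ae_of_all _ fun x => Real.sqrt_nonneg (g x))
    (by simpa using hf.memLp_two_sqrt hf0) (by simpa using hg.memLp_two_sqrt hg0)
  rw [integral_sqrt_sq hf0, integral_sqrt_sq hg0, ← Real.sqrt_eq_rpow,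
    ← Real.sqrt_eq_rpow] at holder
  calc ∫ x, √(f x * g x) ∂μ = ∫ x, √(f x) * √(g x) ∂μ := by
        refine integral_congr_ae ?_
        filter_upwards [hf0] with x hx
        exact Real.sqrt_mul hx _
    _ ≤ _ := holder

end CauchySchwarz

theorem Real.inv_sqrt_mul_eq_sqrt_inv_mul_inv (a b : ℝ) : (√(a * b))⁻¹ = √(a⁻¹ * b⁻¹) := by
  rw [← Real.sqrt_inv, mul_inv]

theorem integrable_inv_one_add_sub_sq (t : ℝ) : Integrable fun τ : ℝ => (1 + (t - τ) ^ 2)⁻¹ :=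
  integrable_inv_one_add_sq.comp_sub_left t

theorem integral_inv_one_add_sub_sq (t : ℝ) : ∫ τ : ℝ, (1 + (t - τ) ^ 2)⁻¹ = Real.pi :=
  (integral_sub_left_eq_self (fun x : ℝ => (1 + x ^ 2)⁻¹) volume t).trans
    integral_univ_inv_one_add_sq

theorem v1_eq_integral_sqrt (t : ℝ) :
    v1 t = ∫ τ : ℝ, √((1 + τ ^ 2)⁻¹ * (1 + (t - τ) ^ 2)⁻¹) := by
  simp only [v1, Real.inv_sqrt_mul_eq_sqrt_inv_mul_inv]

theorem integrable_v1_integrand (t : ℝ) :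
    Integrable fun τ : ℝ => (√((1 + τ ^ 2) * (1 + (t - τ) ^ 2)))⁻¹ := by
  simpa only [Real.inv_sqrt_mul_eq_sqrt_inv_mul_inv] using
    integrable_inv_one_add_sq.sqrt_mul (integrable_inv_one_add_sub_sq t)

theorem v1_zero : v1 0 = Real.pi := by
  simp only [v1_eq_integral_sqrt, zero_sub, even_two, Even.neg_pow,
    Real.sqrt_mul_self (inv_nonneg.mpr (by positivity : (0 : ℝ) ≤ 1 + _ ^ 2))]
  exact integral_univ_inv_one_add_sq

theorem v1_le_pi (t : ℝ) : v1 t ≤ Real.pi := by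
  rw [v1_eq_integral_sqrt]
  calc _ ≤ √(∫ τ : ℝ, (1 + τ ^ 2)⁻¹) * √(∫ τ : ℝ, (1 + (t - τ) ^ 2)⁻¹) :=
        integral_sqrt_mul_le integrable_inv_one_add_sq (integrable_inv_one_add_sub_sq t)
          (ae_of_all _ fun _ => by positivity) (ae_of_all _ fun _ => by positivity)
    _ = Real.pi := by
        rw [integral_univ_inv_one_add_sq, integral_inv_one_add_sub_sq,
          Real.mul_self_sqrt Real.pi_pos.le]

theorem v1_welldefined_and_bounded :
    (∀ t : ℝ, Integrable (fun τ : ℝ => (Real.sqrt ((1 + τ ^ 2) * (1 + (t - τ) ^ 2)))⁻¹)) ∧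
    v1 0 = Real.pi ∧ ∀ t : ℝ, 0 ≤ t → v1 t ≤ v1 0 :=
  ⟨integrable_v1_integrand, v1_zero, fun t _ => v1_zero ▸ v1_le_pi t⟩
end

section
/- The function v₁(t) = ∫_ℝ dτ / √((1+τ²)(1+(t-τ)²)) is differentiable on ℝ, and its derivative satisfies v₁'(t) < 0 for every t > 0; in particular, v₁ is strictly decreasing on (0,∞). -/
open MeasureTheory

/-!
With `w x = (1 + x²)^(-1/2)` we have `v1 t = ∫ w τ * w (t - τ)`. As `w` is bounded and
`|w' x| ≤ (1 + x²)⁻¹`, which changes by at most a factor 3 under shifts of size `≤ 1`, one may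
differentiate under the integral: `v1' t = ∫ w τ * w' (t - τ)`. Substituting `τ = t - s` and
averaging with `s ↦ -s`, oddness of `w'` gives `2 v1' t = ∫ (w (t - s) - w (t + s)) * w' s`.
For `t, s > 0` we have `|t - s| < t + s`, so `w (t - s) > w (t + s)` while `w' s < 0`: the
integrand is negative off `s = 0` (it is even in `s`), hence `v1' t < 0`.
-/

lemma inv_one_add_sq_le_three_mul {a b : ℝ} (h : |a - b| ≤ 1) :
    (1 + a ^ 2)⁻¹ ≤ 3 * (1 + b ^ 2)⁻¹ := by
  have hab : (a - b) ^ 2 ≤ 1 := by nlinarith [abs_le.1 h, sq_abs (a - b)]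
  rw [← div_eq_mul_inv, le_div_iff₀ (by positivity), inv_mul_le_iff₀ (by positivity)]
  nlinarith [sq_nonneg (a + (a - b))]

theorem hasDerivAt_integral_mul_comp_sub {f k k' : ℝ → ℝ} {C : ℝ} (hf : Continuous f)
    (hf_le : ∀ x, |f x| ≤ C) (hk : ∀ x, HasDerivAt k (k' x) x)
    (hk'_le : ∀ x, |k' x| ≤ (1 + x ^ 2)⁻¹) {t₀ : ℝ}
    (hint : Integrable fun τ => f τ * k (t₀ - τ)) :
    HasDerivAt (fun t => ∫ τ, f τ * k (t - τ)) (∫ τ, f τ * k' (t₀ - τ)) t₀ := by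
  have hk_cont : Continuous k := continuous_iff_continuousAt.2 fun x => (hk x).continuousAt
  have hk'_meas : Measurable k' := by
    simpa only [funext fun x => (hk x).deriv] using measurable_deriv k
  refine (hasDerivAt_integral_of_dominated_loc_of_deriv_le (F := fun t τ => f τ * k (t - τ))
    (F' := fun t τ => f τ * k' (t - τ)) (bound := fun τ => |C| * (3 * (1 + (t₀ - τ) ^ 2)⁻¹))
    (Metric.closedBall_mem_nhds t₀ one_pos)
    (.of_forall fun t => (by fun_prop : Continuous fun τ => f τ * k (t - τ)).aestronglyMeasurable)
    hint ?_ ?_ ?_ ?_).2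
  · exact (by fun_prop : Measurable fun τ => f τ * k' (t₀ - τ)).aestronglyMeasurable
  · refine .of_forall fun τ t ht => ?_
    rw [norm_mul, Real.norm_eq_abs, Real.norm_eq_abs]
    refine mul_le_mul ((hf_le τ).trans (le_abs_self C)) ((hk'_le _).trans ?_) (abs_nonneg _)
      (abs_nonneg C)
    refine inv_one_add_sq_le_three_mul ?_
    rwa [sub_sub_sub_cancel_right, ← Real.dist_eq]
  · exact ((integrable_inv_one_add_sq.comp_sub_left t₀).const_mul 3).const_mul |C|
  · refine .of_forall fun τ t _ => ?_
    simpa using ((hk (t - τ)).comp t ((hasDerivAt_id t).sub_const τ)).const_mul (f τ)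

theorem integral_mul_comp_sub_lt_zero {f g : ℝ → ℝ} (hf : ∀ x y, |x| < |y| → f y < f x)
    (hg_odd : ∀ x, g (-x) = -g x) (hg_neg : ∀ x, 0 < x → g x < 0) {t : ℝ} (ht : 0 < t)
    (hint : Integrable fun τ => f τ * g (t - τ)) : ∫ τ, f τ * g (t - τ) < 0 := by
  set h : ℝ → ℝ := fun s => f (t - s) * g s
  have hh : Integrable h := by simpa [h] using hint.comp_sub_left t
  have h_eq : ∫ τ, f τ * g (t - τ) = ∫ s, h s := by
    rw [← integral_sub_left_eq_self _ volume t]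
    simp [h]
  have h_symm_neg : ∀ s, 0 < s → h s + h (-s) < 0 := by
    intro s hs
    have hfs : f (t + s) < f (t - s) := hf _ _ <| by
      rw [abs_of_pos (by linarith : 0 < t + s), abs_lt]
      constructor <;> linarith
    have : h s + h (-s) = (f (t - s) - f (t + s)) * g s := by
      simp only [h, hg_odd, sub_neg_eq_add]; ring
    rw [this]
    exact mul_neg_of_pos_of_neg (by linarith) (hg_neg s hs)
  have h_symm_nonpos : ∀ s, h s + h (-s) ≤ 0 := by
    intro s
    rcases lt_trichotomy s 0 with hs | rfl | hs
    · simpa [add_comm] using (h_symm_neg (-s) (neg_pos.2 hs)).le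
    · have hg0 : g 0 = 0 := by linarith [neg_zero (G := ℝ) ▸ hg_odd 0]
      simp [h, hg0]
    · exact (h_symm_neg s hs).le
  have h_symm_pos : 0 < ∫ s, -(h s + h (-s)) := by
    rw [integral_pos_iff_support_of_nonneg (fun s => neg_nonneg.2 (h_symm_nonpos s))
      (hh.add hh.comp_neg).neg]
    refine lt_of_lt_of_le (by simp) (measure_mono (s := Set.Ioi 0) fun s hs => ?_)
    exact neg_ne_zero.2 (h_symm_neg s hs).ne
  rw [integral_neg, integral_add hh hh.comp_neg, integral_neg_eq_self] at h_symm_pos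
  rw [h_eq]
  linarith

noncomputable def invSqrtOneAddSq (x : ℝ) : ℝ := (√(1 + x ^ 2))⁻¹

noncomputable def derivInvSqrtOneAddSq (x : ℝ) : ℝ := -x / ((1 + x ^ 2) * √(1 + x ^ 2))

lemma sqrt_one_add_sq_pos (x : ℝ) : 0 < √(1 + x ^ 2) := by positivity

lemma continuous_invSqrtOneAddSq : Continuous invSqrtOneAddSq :=
  (by fun_prop : Continuous fun x : ℝ => √(1 + x ^ 2)).inv₀ fun x => (sqrt_one_add_sq_pos x).ne'

lemma abs_invSqrtOneAddSq_le_one (x : ℝ) : |invSqrtOneAddSq x| ≤ 1 := by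
  rw [invSqrtOneAddSq, abs_inv, abs_of_pos (sqrt_one_add_sq_pos x)]
  exact inv_le_one_of_one_le₀ (Real.one_le_sqrt.2 (by nlinarith))

lemma invSqrtOneAddSq_lt_of_abs_lt {x y : ℝ} (h : |x| < |y|) :
    invSqrtOneAddSq y < invSqrtOneAddSq x := by
  have : x ^ 2 < y ^ 2 := sq_lt_sq.2 h
  exact inv_strictAnti₀ (sqrt_one_add_sq_pos x) (Real.sqrt_lt_sqrt (by positivity) (by linarith))

lemma memLp_invSqrtOneAddSq_two : MemLp invSqrtOneAddSq 2 := by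
  refine (memLp_two_iff_integrable_sq continuous_invSqrtOneAddSq.aestronglyMeasurable).2 ?_
  simpa [invSqrtOneAddSq, inv_pow, Real.sq_sqrt (by positivity : (0 : ℝ) ≤ 1 + _ ^ 2)]
    using integrable_inv_one_add_sq

lemma hasDerivAt_invSqrtOneAddSq (x : ℝ) :
    HasDerivAt invSqrtOneAddSq (derivInvSqrtOneAddSq x) x := by
  have h : HasDerivAt invSqrtOneAddSq _ x :=
    (((hasDerivAt_pow 2 x).const_add 1).sqrt (by positivity)).inv (sqrt_one_add_sq_pos x).ne'
  convert h using 1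
  have hs := Real.sq_sqrt (by positivity : (0 : ℝ) ≤ 1 + x ^ 2)
  rw [derivInvSqrtOneAddSq]
  field_simp
  rw [hs]
  push_cast
  ring

lemma abs_derivInvSqrtOneAddSq_le (x : ℝ) : |derivInvSqrtOneAddSq x| ≤ (1 + x ^ 2)⁻¹ := by
  have hx : |x| ≤ √(1 + x ^ 2) := by
    rw [← Real.sqrt_sq_eq_abs]
    exact Real.sqrt_le_sqrt (by linarith)
  have hpos : 0 < (1 + x ^ 2) * √(1 + x ^ 2) := by positivity
  rwa [derivInvSqrtOneAddSq, abs_div, abs_neg, abs_of_pos hpos, div_le_iff₀ hpos,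
    inv_mul_cancel_left₀ (by positivity)]

lemma integrable_derivInvSqrtOneAddSq : Integrable derivInvSqrtOneAddSq :=
  integrable_inv_one_add_sq.mono'
    (by unfold derivInvSqrtOneAddSq; fun_prop : Measurable _).aestronglyMeasurable
    (.of_forall abs_derivInvSqrtOneAddSq_le)

lemma derivInvSqrtOneAddSq_neg (x : ℝ) : derivInvSqrtOneAddSq (-x) = -derivInvSqrtOneAddSq x := by
  simp [derivInvSqrtOneAddSq, neg_div]

lemma derivInvSqrtOneAddSq_neg_of_pos {x : ℝ} (hx : 0 < x) : derivInvSqrtOneAddSq x < 0 :=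
  div_neg_of_neg_of_pos (neg_neg_of_pos hx) (by positivity)

lemma v1_eq_integral (t : ℝ) : v1 t = ∫ τ, invSqrtOneAddSq τ * invSqrtOneAddSq (t - τ) := by
  simp only [v1, invSqrtOneAddSq, Real.sqrt_mul (by positivity : (0 : ℝ) ≤ 1 + _ ^ 2), mul_inv]

lemma integrable_invSqrtOneAddSq_mul_comp_sub (t : ℝ) :
    Integrable fun τ => invSqrtOneAddSq τ * invSqrtOneAddSq (t - τ) :=
  memLp_invSqrtOneAddSq_two.integrable_mul
    (memLp_invSqrtOneAddSq_two.comp_measurePreserving (Measure.measurePreserving_sub_left volume t))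

lemma hasDerivAt_v1 (t : ℝ) :
    HasDerivAt v1 (∫ τ, invSqrtOneAddSq τ * derivInvSqrtOneAddSq (t - τ)) t := by
  rw [show v1 = _ from funext v1_eq_integral]
  exact hasDerivAt_integral_mul_comp_sub continuous_invSqrtOneAddSq abs_invSqrtOneAddSq_le_one
    hasDerivAt_invSqrtOneAddSq abs_derivInvSqrtOneAddSq_le
    (integrable_invSqrtOneAddSq_mul_comp_sub t)

lemma deriv_v1_lt_zero {t : ℝ} (ht : 0 < t) : deriv v1 t < 0 := by
  rw [(hasDerivAt_v1 t).deriv]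
  refine integral_mul_comp_sub_lt_zero (fun _ _ => invSqrtOneAddSq_lt_of_abs_lt)
    derivInvSqrtOneAddSq_neg (fun _ => derivInvSqrtOneAddSq_neg_of_pos) ht ?_
  exact (integrable_derivInvSqrtOneAddSq.comp_sub_left t).bdd_mul
    continuous_invSqrtOneAddSq.aestronglyMeasurable (.of_forall abs_invSqrtOneAddSq_le_one)

theorem v1_differentiable_deriv_neg :
    Differentiable ℝ v1 ∧ (∀ t : ℝ, 0 < t → deriv v1 t < 0) ∧
    StrictAntiOn v1 (Set.Ioi 0) := by
  have hdiff : Differentiable ℝ v1 := fun t => (hasDerivAt_v1 t).differentiableAt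
  refine ⟨hdiff, fun t => deriv_v1_lt_zero, ?_⟩
  refine strictAntiOn_of_deriv_neg (convex_Ioi 0) hdiff.continuous.continuousOn fun t ht => ?_
  exact deriv_v1_lt_zero (by simpa using ht)
end

section
/- For every natural number n ≥ 1, ∫_0^∞ (K₀(y))^{n+1} dy is finite, and there exist positive constants c₁', c₂' independent of n such that c₁' · (n+1)! ≤ ∫_0^∞ (K₀(y))^{n+1} dy ≤ c₂' · (n+1)!. -/
/-!
Bounds on `K₀` come from three elementary estimates on the defining integral: integrating
`1 - y eᵘ ≤ e^{-y cosh u}` over `[0, -log y]` gives `K₀(y) ≥ -log y - 1`; splitting the integral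
at `u = log (2/y)` gives `K₀(y) ≤ log (2e/y)` for `y ≤ 2`; and `cosh ≥ 1` gives
`K₀(y) ≤ e^{s-y} K₀(s)` for `y ≥ s`, hence `K₀(y) ≤ e^{2-y}` for `y ≥ 2`.
Under `y = c e^{-t}` the integral `∫₀^c log (c/y)^m dy` becomes `c Γ(m+1) = c m!`, so the `m`-th
power of `K₀` integrates to between `e⁻¹ m!` and `(2e + e²) m!`.
-/

open MeasureTheory

noncomputable def K0 (y : ℝ) : ℝ := ∫ u in Set.Ioi (0 : ℝ), Real.exp (-y * Real.cosh u)

open Real Set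

lemma image_const_mul_exp_neg_Ioi {c : ℝ} (hc : 0 < c) :
    (fun t => c * exp (-t)) '' Ioi 0 = Ioo 0 c := by
  have : (fun t => c * exp (-t)) = (c * ·) ∘ exp ∘ Neg.neg := rfl
  rw [this, image_comp, image_comp, image_neg_eq_neg, neg_Ioi, neg_zero, image_exp_Iio,
    image_mul_left_Ioo hc, mul_zero, exp_zero, mul_one]

lemma integrableOn_exp_neg_mul_pow (m : ℕ) :
    IntegrableOn (fun t => exp (-t) * t ^ m) (Ioi 0) := by
  have := GammaIntegral_convergent (s := m + 1) (by positivity)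
  simpa only [add_sub_cancel_right, rpow_natCast] using this

lemma integral_exp_neg_mul_pow (m : ℕ) : ∫ t in Ioi 0, exp (-t) * t ^ m = m.factorial := by
  have := Gamma_eq_integral (s := m + 1) (by positivity)
  simpa only [add_sub_cancel_right, rpow_natCast, Gamma_nat_eq_factorial] using this.symm

lemma abs_deriv_smul_comp_const_mul_exp_neg {c : ℝ} (hc : 0 < c) (g : ℝ → ℝ) (t : ℝ) :
    |c * (exp (-t) * -1)| • g (log (c / (c * exp (-t)))) = c * (exp (-t) * g t) := by
  rw [mul_neg_one, mul_neg, abs_neg, abs_of_pos (by positivity), div_mul_cancel_left₀ hc.ne',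
    ← exp_neg, neg_neg, log_exp, smul_eq_mul, mul_assoc]

lemma integrableOn_Ioo_comp_log_div_iff {c : ℝ} (hc : 0 < c) (g : ℝ → ℝ) :
    IntegrableOn (fun y => g (log (c / y))) (Ioo 0 c) ↔
      IntegrableOn (fun t => exp (-t) * g t) (Ioi 0) := by
  rw [← image_const_mul_exp_neg_Ioi hc, integrableOn_image_iff_integrableOn_abs_deriv_smul
    measurableSet_Ioi (fun t _ => ((hasDerivAt_neg t).exp.const_mul c).hasDerivWithinAt)
    (fun a _ b _ h => by simpa [hc.ne'] using h)]
  simp_rw [abs_deriv_smul_comp_const_mul_exp_neg hc]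
  exact integrable_const_mul_iff (isUnit_iff_ne_zero.2 hc.ne') _

lemma integral_Ioo_comp_log_div {c : ℝ} (hc : 0 < c) (g : ℝ → ℝ) :
    ∫ y in Ioo 0 c, g (log (c / y)) = c * ∫ t in Ioi 0, exp (-t) * g t := by
  rw [← image_const_mul_exp_neg_Ioi hc, integral_image_eq_integral_abs_deriv_smul
    measurableSet_Ioi (fun t _ => ((hasDerivAt_neg t).exp.const_mul c).hasDerivWithinAt)
    (fun a _ b _ h => by simpa [hc.ne'] using h)]
  simp_rw [abs_deriv_smul_comp_const_mul_exp_neg hc]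
  exact integral_const_mul c _

lemma integrableOn_log_div_pow {c : ℝ} (hc : 0 < c) (m : ℕ) :
    IntegrableOn (fun y => log (c / y) ^ m) (Ioo 0 c) :=
  (integrableOn_Ioo_comp_log_div_iff hc (· ^ m)).2 (integrableOn_exp_neg_mul_pow m)

lemma integral_log_div_pow {c : ℝ} (hc : 0 < c) (m : ℕ) :
    ∫ y in Ioo 0 c, log (c / y) ^ m = c * m.factorial := by
  rw [integral_Ioo_comp_log_div hc (· ^ m), integral_exp_neg_mul_pow]

lemma integrableOn_exp_sub_Ioi (a c : ℝ) : IntegrableOn (fun y => exp (a - y)) (Ioi c) := by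
  simp only [sub_eq_add_neg, exp_add]
  exact (integrableOn_exp_neg_Ioi c).const_mul (exp a)

lemma integral_exp_sub_Ioi (a c : ℝ) : ∫ y in Ioi c, exp (a - y) = exp (a - c) := by
  simp only [sub_eq_add_neg, exp_add, integral_const_mul, integral_exp_neg_Ioi]

lemma half_exp_le_cosh (u : ℝ) : exp u / 2 ≤ cosh u := by
  rw [cosh_eq]
  linarith [exp_pos (-u)]

lemma cosh_le_exp_of_nonneg {u : ℝ} (hu : 0 ≤ u) : cosh u ≤ exp u := by
  rw [cosh_eq]
  linarith [exp_le_exp.2 (neg_le_self hu)]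

lemma integrableOn_exp_neg_mul_cosh {y : ℝ} (hy : 0 < y) :
    IntegrableOn (fun u => exp (-y * cosh u)) (Ioi 0) := by
  refine (exp_neg_integrableOn_Ioi 0 (half_pos hy)).mono'
    (by fun_prop : Continuous fun u => exp (-y * cosh u)).aestronglyMeasurable ?_
  filter_upwards with u
  rw [norm_of_nonneg (exp_pos _).le, exp_le_exp]
  nlinarith [half_exp_le_cosh u, add_one_le_exp u]

lemma K0_stronglyMeasurable : StronglyMeasurable K0 :=
  (by fun_prop : Continuous fun p : ℝ × ℝ => exp (-p.1 * cosh p.2)).stronglyMeasurable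
    |>.integral_prod_right'

lemma K0_nonneg (y : ℝ) : 0 ≤ K0 y :=
  setIntegral_nonneg measurableSet_Ioi fun _ _ => (exp_pos _).le

lemma sub_mul_exp_sub_one_le_K0 {y L : ℝ} (hy : 0 < y) (hL : 0 ≤ L) :
    L - y * (exp L - 1) ≤ K0 y := by
  have hlin : ∫ u in 0..L, (1 - y * exp u) = L - y * (exp L - 1) := by
    simp [integral_exp]
  rw [← hlin, intervalIntegral.integral_of_le hL]
  calc ∫ u in Ioc 0 L, (1 - y * exp u) ≤ ∫ u in Ioc 0 L, exp (-y * cosh u) :=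
        setIntegral_mono_on (by fun_prop : Continuous fun u => 1 - y * exp u).integrableOn_Ioc
          (by fun_prop : Continuous fun u => exp (-y * cosh u)).integrableOn_Ioc
          measurableSet_Ioc fun u hu => ?_
    _ ≤ K0 y := setIntegral_mono_set (integrableOn_exp_neg_mul_cosh hy)
        (.of_forall fun _ => (exp_pos _).le) Ioc_subset_Ioi_self.eventuallyLE
  calc 1 - y * exp u ≤ exp (-(y * exp u)) := by linarith [add_one_le_exp (-(y * exp u))]
    _ ≤ exp (-y * cosh u) := by
      rw [exp_le_exp, neg_mul, neg_le_neg_iff]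
      exact mul_le_mul_of_nonneg_left (cosh_le_exp_of_nonneg hu.1.le) hy.le

lemma neg_log_sub_one_le_K0 {y : ℝ} (hy : 0 < y) : -log y - 1 ≤ K0 y := by
  rcases lt_or_ge y 1 with hy1 | hy1
  · have := sub_mul_exp_sub_one_le_K0 hy (neg_nonneg.2 (log_nonpos hy.le hy1.le))
    rw [exp_neg, exp_log hy, mul_sub, mul_inv_cancel₀ hy.ne'] at this
    linarith
  · linarith [log_nonneg hy1, K0_nonneg y]

lemma K0_le_add_one {y u₀ : ℝ} (hy : 0 < y) (hu₀ : 0 ≤ u₀) (h : 2 ≤ y * exp u₀) :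
    K0 y ≤ u₀ + 1 := by
  have hint := integrableOn_exp_neg_mul_cosh hy
  have head : ∫ u in Ioc 0 u₀, exp (-y * cosh u) ≤ u₀ := by
    calc ∫ u in Ioc 0 u₀, exp (-y * cosh u) ≤ ∫ _ in Ioc 0 u₀, (1 : ℝ) :=
          setIntegral_mono_on (hint.mono_set Ioc_subset_Ioi_self)
            (integrableOn_const measure_Ioc_lt_top.ne) measurableSet_Ioc
            fun u _ => exp_le_one_iff.2 (by nlinarith [one_le_cosh u])
      _ = u₀ := by simp [hu₀]
  have tail : ∫ u in Ioi u₀, exp (-y * cosh u) ≤ 1 := by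
    calc ∫ u in Ioi u₀, exp (-y * cosh u) ≤ ∫ u in Ioi u₀, exp (u₀ - u) :=
          setIntegral_mono_on (hint.mono_set (Ioi_subset_Ioi hu₀)) (integrableOn_exp_sub_Ioi _ _)
            measurableSet_Ioi fun u _ => ?_
      _ = 1 := by rw [integral_exp_sub_Ioi, sub_self, exp_zero]
    -- `y cosh u ≥ y exp u / 2 ≥ exp (u - u₀) ≥ u - u₀`
    have hsplit : exp u = exp u₀ * exp (u - u₀) := by rw [← exp_add, add_sub_cancel]
    rw [exp_le_exp]
    nlinarith [mul_le_mul_of_nonneg_left (half_exp_le_cosh u) hy.le,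
      mul_le_mul_of_nonneg_right h (exp_pos (u - u₀)).le, add_one_le_exp (u - u₀)]
  rw [K0, ← Ioc_union_Ioi_eq_Ioi hu₀, setIntegral_union (Ioc_disjoint_Ioi le_rfl)
    measurableSet_Ioi (hint.mono_set Ioc_subset_Ioi_self) (hint.mono_set (Ioi_subset_Ioi hu₀))]
  linarith

lemma K0_le_log_div_of_le_two {y : ℝ} (hy : 0 < y) (hy2 : y ≤ 2) :
    K0 y ≤ log (2 * exp 1 / y) := by
  have h := K0_le_add_one hy (log_nonneg ((one_le_div hy).2 hy2))
    (by rw [exp_log (by positivity), mul_div_cancel₀ _ hy.ne'])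
  rwa [mul_div_right_comm, log_mul (by positivity) (exp_pos 1).ne', log_exp]

lemma K0_le_exp_sub_mul_K0 {s y : ℝ} (hs : 0 < s) (hsy : s ≤ y) :
    K0 y ≤ exp (s - y) * K0 s := by
  rw [K0, K0, ← integral_const_mul]
  refine setIntegral_mono_on (integrableOn_exp_neg_mul_cosh (hs.trans_le hsy))
    ((integrableOn_exp_neg_mul_cosh hs).const_mul _) measurableSet_Ioi fun u _ => ?_
  rw [← exp_add, exp_le_exp]
  nlinarith [one_le_cosh u]

lemma K0_le_exp_two_sub_of_two_le {y : ℝ} (hy : 2 ≤ y) : K0 y ≤ exp (2 - y) := by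
  have h2 : K0 2 ≤ 1 := by
    simpa [mul_div_cancel_left₀] using K0_le_log_div_of_le_two two_pos le_rfl
  calc K0 y ≤ exp (2 - y) * K0 2 := K0_le_exp_sub_mul_K0 two_pos hy
    _ ≤ exp (2 - y) := mul_le_of_le_one_right (exp_pos _).le h2

lemma K0_pow_le {m : ℕ} (hm : m ≠ 0) {y : ℝ} (hy : 0 < y) :
    K0 y ^ m ≤ (Ioo 0 (2 * exp 1)).indicator (fun y => log (2 * exp 1 / y) ^ m) y
      + exp (2 - y) := by
  rcases le_or_gt y 2 with hy2 | hy2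
  · have hmem : y ∈ Ioo 0 (2 * exp 1) := by
      refine ⟨hy, ?_⟩
      nlinarith [add_one_lt_exp one_ne_zero]
    rw [indicator_of_mem hmem]
    linarith [pow_le_pow_left₀ (K0_nonneg y) (K0_le_log_div_of_le_two hy hy2) m, exp_pos (2 - y)]
  · have hind : 0 ≤ (Ioo 0 (2 * exp 1)).indicator (fun y => log (2 * exp 1 / y) ^ m) y :=
      indicator_nonneg (fun z hz => pow_nonneg (log_nonneg ((one_le_div hz.1).2 hz.2.le)) m) y
    have hexp : exp (2 - y) ≤ 1 := exp_le_one_iff.2 (by linarith)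
    calc K0 y ^ m ≤ exp (2 - y) ^ m :=
          pow_le_pow_left₀ (K0_nonneg y) (K0_le_exp_two_sub_of_two_le hy2.le) m
      _ ≤ exp (2 - y) := pow_le_of_le_one (exp_pos _).le hexp hm
      _ ≤ _ := le_add_of_nonneg_left hind

lemma integrableOn_K0_pow {m : ℕ} (hm : m ≠ 0) : IntegrableOn (fun y => K0 y ^ m) (Ioi 0) := by
  have hc : (0 : ℝ) < 2 * exp 1 := by positivity
  refine Integrable.mono' ((((integrableOn_log_div_pow hc m).integrable_indicator
      measurableSet_Ioo).integrableOn).add (integrableOn_exp_sub_Ioi 2 0))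
    (K0_stronglyMeasurable.pow m).aestronglyMeasurable ?_
  filter_upwards [ae_restrict_mem measurableSet_Ioi] with y hy
  rw [norm_of_nonneg (pow_nonneg (K0_nonneg y) m)]
  exact K0_pow_le hm hy

lemma integral_K0_pow_le {m : ℕ} (hm : m ≠ 0) :
    ∫ y in Ioi 0, K0 y ^ m ≤ (2 * exp 1 + exp 2) * m.factorial := by
  have hc : (0 : ℝ) < 2 * exp 1 := by positivity
  have hlog := (integrableOn_log_div_pow hc m).integrable_indicator measurableSet_Ioo
  calc ∫ y in Ioi 0, K0 y ^ m
      ≤ ∫ y in Ioi 0, ((Ioo 0 (2 * exp 1)).indicator (fun y => log (2 * exp 1 / y) ^ m) y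
          + exp (2 - y)) :=
        setIntegral_mono_on (integrableOn_K0_pow hm)
          (hlog.integrableOn.add (integrableOn_exp_sub_Ioi 2 0)) measurableSet_Ioi
          fun y hy => K0_pow_le hm hy
    _ = 2 * exp 1 * m.factorial + exp 2 := by
        rw [integral_add hlog.integrableOn (integrableOn_exp_sub_Ioi 2 0),
          setIntegral_indicator measurableSet_Ioo, inter_eq_right.2 Ioo_subset_Ioi_self,
          integral_log_div_pow hc, integral_exp_sub_Ioi, sub_zero]
    _ ≤ (2 * exp 1 + exp 2) * m.factorial := by
        have : (1 : ℝ) ≤ m.factorial := by exact_mod_cast m.factorial_pos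
        nlinarith [exp_pos 2]

lemma exp_neg_one_mul_factorial_le_integral_K0_pow {m : ℕ} (hm : m ≠ 0) :
    exp (-1) * m.factorial ≤ ∫ y in Ioi 0, K0 y ^ m := by
  have hc : (0 : ℝ) < exp (-1) := exp_pos _
  calc exp (-1) * m.factorial = ∫ y in Ioo 0 (exp (-1)), log (exp (-1) / y) ^ m :=
        (integral_log_div_pow hc m).symm
    _ ≤ ∫ y in Ioo 0 (exp (-1)), K0 y ^ m :=
        setIntegral_mono_on (integrableOn_log_div_pow hc m)
          ((integrableOn_K0_pow hm).mono_set Ioo_subset_Ioi_self) measurableSet_Ioo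
          fun y hy => ?_
    _ ≤ ∫ y in Ioi 0, K0 y ^ m :=
        setIntegral_mono_set (integrableOn_K0_pow hm)
          (.of_forall fun y => pow_nonneg (K0_nonneg y) m) Ioo_subset_Ioi_self.eventuallyLE
  have hlog : log (exp (-1) / y) = -log y - 1 := by
    rw [log_div hc.ne' hy.1.ne', log_exp]
    ring
  refine pow_le_pow_left₀ (log_nonneg ((one_le_div hy.1).2 hy.2.le)) ?_ m
  exact hlog ▸ neg_log_sub_one_le_K0 hy.1

theorem K0_pow_integral_bounds :
    ∃ c₁' c₂' : ℝ, 0 < c₁' ∧ 0 < c₂' ∧ ∀ n : ℕ, 1 ≤ n →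
      IntegrableOn (fun y => (K0 y) ^ (n + 1)) (Set.Ioi 0) ∧
      c₁' * (Nat.factorial (n + 1) : ℝ) ≤ ∫ y in Set.Ioi (0:ℝ), (K0 y) ^ (n + 1) ∧
      (∫ y in Set.Ioi (0:ℝ), (K0 y) ^ (n + 1)) ≤ c₂' * (Nat.factorial (n + 1) : ℝ) :=
  ⟨exp (-1), 2 * exp 1 + exp 2, exp_pos _, by positivity, fun n _ =>
    ⟨integrableOn_K0_pow n.succ_ne_zero,
      exp_neg_one_mul_factorial_le_integral_K0_pow n.succ_ne_zero,
      integral_K0_pow_le n.succ_ne_zero⟩⟩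
end

section
/- Let t ≥ 4 and α ∈ ℝ with |α| ≤ 1/80. Then ln(t(1+α) + √(t²(1+α)² - 1)) = ln(t + √(t²-1)) + β, where β = ln[1 + α·(t/(t+√(t²-1)))·(1 + (2+α)t/(√(t²-1)+√(t²(1+α)²-1)))], and moreover |α|/4 ≤ |β| ≤ 4|α| and |β| ≤ 1/20. -/
/-!
Rationalising `√(t²(1+α)² - 1) - √(t² - 1)` turns the quotient of the two arguments of `log`
into `1 + α X`, where `X` is the product in `β`. For `t ≥ 4` both square roots are at least
`3t/4`, which traps `X` in `[1/2, 3/2]`, and the bounds on `β` follow from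
`|y|/2 ≤ |log (1 + y)| ≤ 2|y|` for `|y| ≤ 1/2`.
-/

open Real

namespace Real

lemma abs_log_one_add_le_two_mul {y : ℝ} (hy : |y| ≤ 1 / 2) : |log (1 + y)| ≤ 2 * |y| := by
  have h := abs_log_sub_add_sum_range_le (x := -y) (by rw [abs_neg]; linarith) 0
  rw [Finset.sum_range_zero, zero_add, abs_neg, pow_one, sub_neg_eq_add] at h
  calc |log (1 + y)| ≤ |y| / (1 - |y|) := h
    _ ≤ 2 * |y| := by rw [div_le_iff₀ (by linarith)]; nlinarith [abs_nonneg y]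

lemma abs_div_two_le_abs_log_one_add {y : ℝ} (hy : |y| ≤ 1 / 2) : |y| / 2 ≤ |log (1 + y)| := by
  obtain ⟨hy₁, hy₂⟩ := abs_le.mp hy
  rcases le_or_gt 0 y with hy₀ | hy₀
  · have h := le_log_one_add_of_nonneg hy₀
    rw [div_le_iff₀ (by linarith)] at h
    rw [abs_of_nonneg hy₀, abs_of_nonneg (by nlinarith)]
    nlinarith
  · have h := log_le_sub_one_of_pos (x := 1 + y) (by linarith)
    rw [abs_of_neg hy₀, abs_of_neg (by linarith)]
    linarith

end Real

-- Rationalising: `s' - s = (s'² - s²) / (s + s') = α (2 + α) t² / (s + s')`.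
lemma add_div_add_eq_one_add_mul {K : Type*} [Field K] {t s s' α : K}
    (hs : s ^ 2 = t ^ 2 - 1) (hs' : s' ^ 2 = t ^ 2 * (1 + α) ^ 2 - 1)
    (hts : t + s ≠ 0) (hss' : s + s' ≠ 0) :
    (t * (1 + α) + s') / (t + s) = 1 + α * (t / (t + s) * (1 + (2 + α) * t / (s + s'))) := by
  field_simp
  linear_combination hs' - hs

lemma div_add_mul_one_add_div_add_mem_Icc {t s s' α : ℝ} (ht : 0 < t) (hs : 3 / 4 * t ≤ s)
    (hst : s ≤ t) (hs' : 3 / 4 * t ≤ s') (hα : |α| ≤ 1 / 80) :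
    t / (t + s) * (1 + (2 + α) * t / (s + s')) ∈ Set.Icc (1 / 2) (3 / 2) := by
  obtain ⟨hα₁, hα₂⟩ := abs_le.mp hα
  have hts : 0 < t + s := by linarith
  have hss' : 0 < s + s' := by linarith
  have h₁ : 1 / 2 ≤ t / (t + s) := by rw [le_div_iff₀ hts]; linarith
  have h₂ : t / (t + s) ≤ 4 / 7 := by rw [div_le_iff₀ hts]; linarith
  have h₃ : 0 ≤ (2 + α) * t / (s + s') := div_nonneg (by nlinarith) hss'.le
  have h₄ : (2 + α) * t / (s + s') ≤ 161 / 120 := by rw [div_le_iff₀ hss']; nlinarith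
  exact ⟨by nlinarith, by nlinarith⟩

theorem arcosh_perturbation (t α : ℝ) (ht : 4 ≤ t) (hα : |α| ≤ 1 / 80) :
    let β := Real.log (1 + α * (t / (t + Real.sqrt (t ^ 2 - 1))) *
      (1 + (2 + α) * t / (Real.sqrt (t ^ 2 - 1) + Real.sqrt (t ^ 2 * (1 + α) ^ 2 - 1))))
    Real.log (t * (1 + α) + Real.sqrt (t ^ 2 * (1 + α) ^ 2 - 1)) =
      Real.log (t + Real.sqrt (t ^ 2 - 1)) + β ∧
    |α| / 4 ≤ |β| ∧ |β| ≤ 4 * |α| ∧ |β| ≤ 1 / 20 := by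
  intro β
  obtain ⟨hα₁, hα₂⟩ := abs_le.mp hα
  set s := √(t ^ 2 - 1)
  set s' := √(t ^ 2 * (1 + α) ^ 2 - 1)
  have hs : 3 / 4 * t ≤ s := (le_sqrt' (by positivity)).mpr (by nlinarith)
  have hst : s ≤ t := sqrt_le_iff.mpr ⟨by linarith, by linarith⟩
  have htα : (7 / 8 * t) ^ 2 ≤ t ^ 2 * (1 + α) ^ 2 := by
    rw [← mul_pow]; exact pow_le_pow_left₀ (by positivity) (by nlinarith) 2
  have hs' : 3 / 4 * t ≤ s' := (le_sqrt' (by positivity)).mpr (by nlinarith)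
  set X := t / (t + s) * (1 + (2 + α) * t / (s + s'))
  obtain ⟨hX₁, hX₂⟩ := div_add_mul_one_add_div_add_mem_Icc (by linarith) hs hst hs' hα
  have hβ : β = log (1 + α * X) := by simp only [β, X, s, s', mul_assoc]
  obtain ⟨hαX₁, hαX₂⟩ : |α| / 2 ≤ |α * X| ∧ |α * X| ≤ 3 / 2 * |α| := by
    rw [abs_mul, abs_of_pos (by linarith : 0 < X)]
    exact ⟨by nlinarith [abs_nonneg α], by nlinarith [abs_nonneg α]⟩
  have hlower := abs_div_two_le_abs_log_one_add (y := α * X) (by linarith)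
  have hupper := abs_log_one_add_le_two_mul (y := α * X) (by linarith)
  have hratio := add_div_add_eq_one_add_mul (s := s) (s' := s')
    (sq_sqrt (by nlinarith)) (sq_sqrt (by nlinarith)) (by linarith) (by linarith)
  rw [hβ]
  refine ⟨?_, by linarith, by linarith, by linarith⟩
  rw [← hratio, log_div (by nlinarith) (by linarith)]
  ring
end

section
/- Let g : [0,1] → [0,1] be a C³ orientation-preserving diffeomorphism with g(0)=0, g(1)=1, g' > 0, and let C = max_{t∈[0,1]} |g''(t)|. Then for any 0 ≤ x_{k-2} < x_{k-1} < x_k ≤ 1 there exist points x*, x** ∈ (0,1) such that (g(x_k)-g(x_{k-2}))/(2√((g(x_k)-g(x_{k-1}))(g(x_{k-1})-g(x_{k-2})))) = ((x_k - x_{k-2})/(2√((x_k-x_{k-1})(x_{k-1}-x_{k-2}))))·(1 + λ(x_k - x_{k-2})) for some real λ with |λ| ≤ 4C/min g', provided C·(x_k - x_{k-2}) is sufficiently small (e.g. < 1/400 · min g'). -/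
/-!
By the mean value theorem, `g c - g a`, `g c - g b` and `g b - g a` are `p (c - a)`, `u (c - b)`
and `v (b - a)` for values `p, u, v` of `g'` on `(a, c)`, so the cross ratio of the images is the
cross ratio of `a, b, c` times `p / √(u v)`. Since `|g''| ≤ C`, the values of `g'` on `[a, c]`
differ by at most `C (c - a)`; the geometric mean `√(u v)` lies between `u` and `v`, hence within
`C (c - a)` of `p`, and `√(u v) ≥ m` gives `|p / √(u v) - 1| ≤ C (c - a) / m`.
-/

open Set

noncomputable def crossRatio (x y z : ℝ) : ℝ := (z - x) / (2 * √((z - y) * (y - x)))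

theorem crossRatio_eq_mul_of_slopes {x y z x' y' z' p u v : ℝ} (huv : 0 ≤ u * v)
    (hp : z' - x' = p * (z - x)) (hu : z' - y' = u * (z - y)) (hv : y' - x' = v * (y - x)) :
    crossRatio x' y' z' = crossRatio x y z * (p / √(u * v)) := by
  have hsqrt : √((z' - y') * (y' - x')) = √(u * v) * √((z - y) * (y - x)) := by
    rw [hu, hv, ← Real.sqrt_mul huv]
    ring_nf
  rw [crossRatio, crossRatio, hsqrt, hp]
  ring

theorem min_le_sqrt_mul {u v : ℝ} (hu : 0 ≤ u) (hv : 0 ≤ v) : min u v ≤ √(u * v) :=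
  Real.le_sqrt_of_sq_le <| by
    rw [sq]
    exact mul_le_mul (min_le_left u v) (min_le_right u v) (le_min hu hv) hu

theorem sqrt_mul_le_max {u v : ℝ} (hu : 0 ≤ u) (hv : 0 ≤ v) : √(u * v) ≤ max u v :=
  Real.sqrt_le_iff.2 ⟨hu.trans (le_max_left u v), by
    rw [sq]
    exact mul_le_mul (le_max_left u v) (le_max_right u v) hv (hu.trans (le_max_left u v))⟩

theorem abs_sub_sqrt_mul_le {p u v ε : ℝ} (hu : 0 ≤ u) (hv : 0 ≤ v) (hup : |u - p| ≤ ε)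
    (hvp : |v - p| ≤ ε) : |p - √(u * v)| ≤ ε := by
  have hmin := min_le_sqrt_mul hu hv
  have hmax := sqrt_mul_le_max hu hv
  rw [abs_le] at hup hvp ⊢
  constructor
  · linarith [max_le (by linarith : u ≤ p + ε) (by linarith : v ≤ p + ε)]
  · linarith [le_min (by linarith : p - ε ≤ u) (by linarith : p - ε ≤ v)]

theorem exists_mem_Ioo_sub_eq_mul {f f' : ℝ → ℝ} {x y : ℝ} (hxy : x < y)
    (hf : ContinuousOn f (Icc x y)) (hf' : ∀ t ∈ Ioo x y, HasDerivAt f (f' t) t) :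
    ∃ ξ ∈ Ioo x y, f y - f x = f' ξ * (y - x) := by
  obtain ⟨ξ, hξ, hslope⟩ := exists_hasDerivAt_eq_slope f f' hxy hf hf'
  exact ⟨ξ, hξ, by rw [hslope, div_mul_cancel₀ _ (sub_pos.2 hxy).ne']⟩

theorem abs_derivWithin_sub_le {f : ℝ → ℝ} {s : Set ℝ} {C x y : ℝ} (hs : Convex ℝ s)
    (hs' : UniqueDiffOn ℝ s) (hf : ContDiffOn ℝ 2 f s)
    (bound : ∀ t ∈ s, |iteratedDerivWithin 2 f s t| ≤ C) (hx : x ∈ s) (hy : y ∈ s) :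
    |derivWithin f s x - derivWithin f s y| ≤ C * |x - y| := by
  have hdiff : DifferentiableOn ℝ (derivWithin f s) s :=
    (hf.derivWithin hs' (m := 1) (by norm_num)).differentiableOn one_ne_zero
  have hbound : ∀ t ∈ s, ‖derivWithin (derivWithin f s) s t‖ ≤ C := fun t ht => by
    simpa [iteratedDerivWithin_succ'] using bound t ht
  exact hs.norm_image_sub_le_of_norm_derivWithin_le hdiff hbound hy hx

theorem exists_crossRatio_eq_mul_one_add {f f' : ℝ → ℝ} {a b c m C : ℝ} (hab : a < b)
    (hbc : b < c) (hf : ContinuousOn f (Icc a c)) (hf' : ∀ t ∈ Ioo a c, HasDerivAt f (f' t) t)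
    (hm : 0 < m) (hf'm : ∀ t ∈ Ioo a c, m ≤ f' t)
    (hosc : ∀ x ∈ Ioo a c, ∀ y ∈ Ioo a c, |f' x - f' y| ≤ C * (c - a)) :
    ∃ lam : ℝ, |lam| ≤ C / m ∧
      crossRatio (f a) (f b) (f c) = crossRatio a b c * (1 + lam * (c - a)) := by
  have hca : 0 < c - a := by linarith
  obtain ⟨ξ, hξ, hp⟩ := exists_mem_Ioo_sub_eq_mul (hab.trans hbc) hf hf'
  obtain ⟨ξ₁, hξ₁, hu⟩ := exists_mem_Ioo_sub_eq_mul hbc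
    (hf.mono (Icc_subset_Icc_left hab.le)) fun t ht => hf' t ⟨hab.trans ht.1, ht.2⟩
  obtain ⟨ξ₂, hξ₂, hv⟩ := exists_mem_Ioo_sub_eq_mul hab
    (hf.mono (Icc_subset_Icc_right hbc.le)) fun t ht => hf' t ⟨ht.1, ht.2.trans hbc⟩
  have hξ₁' : ξ₁ ∈ Ioo a c := ⟨hab.trans hξ₁.1, hξ₁.2⟩
  have hξ₂' : ξ₂ ∈ Ioo a c := ⟨hξ₂.1, hξ₂.2.trans hbc⟩
  have hu₀ : 0 ≤ f' ξ₁ := hm.le.trans (hf'm ξ₁ hξ₁')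
  have hv₀ : 0 ≤ f' ξ₂ := hm.le.trans (hf'm ξ₂ hξ₂')
  set q := √(f' ξ₁ * f' ξ₂)
  have hmq : m ≤ q :=
    (le_min (hf'm ξ₁ hξ₁') (hf'm ξ₂ hξ₂')).trans (min_le_sqrt_mul hu₀ hv₀)
  have hq : 0 < q := hm.trans_le hmq
  have hpq : |f' ξ - q| ≤ C * (c - a) :=
    abs_sub_sqrt_mul_le hu₀ hv₀ (hosc ξ₁ hξ₁' ξ hξ) (hosc ξ₂ hξ₂' ξ hξ)
  refine ⟨(f' ξ / q - 1) / (c - a), ?_, ?_⟩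
  · calc |(f' ξ / q - 1) / (c - a)|
        _ = |f' ξ - q| / q / (c - a) := by
          rw [abs_div, abs_of_pos hca, div_sub_one hq.ne', abs_div, abs_of_pos hq]
        _ ≤ C * (c - a) / m / (c - a) := by gcongr; exact (abs_nonneg _).trans hpq
        _ = C / m := by field_simp
  · rw [crossRatio_eq_mul_of_slopes (mul_nonneg hu₀ hv₀) hp hu hv,
      div_mul_cancel₀ _ hca.ne', add_sub_cancel]

theorem cross_ratio_perturbation_general (g : ℝ → ℝ)
    (hg : ContDiffOn ℝ 3 g (Icc 0 1))
    (hg' : ∀ t ∈ Icc (0:ℝ) 1, 0 < derivWithin g (Icc 0 1) t)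
    (C m : ℝ)
    (hC : C = sSup ((fun t => |iteratedDerivWithin 2 g (Icc 0 1) t|) '' Icc 0 1))
    (hm : m = sInf (derivWithin g (Icc 0 1) '' Icc 0 1))
    (a b c : ℝ) (hab : a < b) (hbc : b < c) (ha : 0 ≤ a) (hc : c ≤ 1) :
    ∃ lam : ℝ, |lam| ≤ 4 * C / m ∧
      (g c - g a) / (2 * Real.sqrt ((g c - g b) * (g b - g a))) =
        ((c - a) / (2 * Real.sqrt ((c - b) * (b - a)))) * (1 + lam * (c - a)) := by
  set s := Icc (0:ℝ) 1
  have hs : UniqueDiffOn ℝ s := uniqueDiffOn_Icc one_pos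
  have hsub : Ioo a c ⊆ s := Ioo_subset_Icc_self.trans (Icc_subset_Icc ha hc)
  have hg₁ : ContinuousOn (derivWithin g s) s := hg.continuousOn_derivWithin hs (by norm_num)
  have hC_le : ∀ t ∈ s, |iteratedDerivWithin 2 g s t| ≤ C := fun t ht =>
    hC ▸ (hg.continuousOn_iteratedDerivWithin (by norm_num) hs).abs.le_sSup_image_Icc ht
  have hC₀ : 0 ≤ C := (abs_nonneg _).trans (hC_le 0 (left_mem_Icc.2 zero_le_one))
  have hm_le : ∀ t ∈ s, m ≤ derivWithin g s t := fun t ht => hm ▸ hg₁.sInf_image_Icc_le ht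
  have hm₀ : 0 < m := by
    obtain ⟨t, ht, hmt⟩ := isCompact_Icc.exists_sInf_image_eq (nonempty_Icc.2 zero_le_one) hg₁
    exact hm ▸ hmt ▸ hg' t ht
  have hderiv (t : ℝ) (ht : t ∈ Ioo a c) : HasDerivAt g (derivWithin g s t) t :=
    (hg.differentiableOn (by norm_num) t (hsub ht)).hasDerivWithinAt.hasDerivAt
      (Icc_mem_nhds (ha.trans_lt ht.1) (ht.2.trans_le hc))
  have hosc (x : ℝ) (hx : x ∈ Ioo a c) (y : ℝ) (hy : y ∈ Ioo a c) :
      |derivWithin g s x - derivWithin g s y| ≤ C * (c - a) := by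
    have hxy : |x - y| ≤ c - a :=
      abs_sub_le_iff.2 ⟨by linarith [hx.2, hy.1], by linarith [hx.1, hy.2]⟩
    calc |derivWithin g s x - derivWithin g s y| ≤ C * |x - y| :=
          abs_derivWithin_sub_le (convex_Icc 0 1) hs (hg.of_le (by norm_num)) hC_le
            (hsub hx) (hsub hy)
      _ ≤ C * (c - a) := mul_le_mul_of_nonneg_left hxy hC₀
  obtain ⟨lam, hlam, heq⟩ := exists_crossRatio_eq_mul_one_add hab hbc
    (hg.continuousOn.mono (Icc_subset_Icc ha hc)) hderiv hm₀ (fun t ht => hm_le t (hsub ht)) hosc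
  exact ⟨lam, hlam.trans (div_le_div_of_nonneg_right (by linarith) hm₀.le), heq⟩

theorem cross_ratio_perturbation (g : ℝ → ℝ)
    (hg : ContDiffOn ℝ 3 g (Icc 0 1)) (hg0 : g 0 = 0) (hg1 : g 1 = 1)
    (hg' : ∀ t ∈ Icc (0:ℝ) 1, 0 < derivWithin g (Icc 0 1) t)
    (C m : ℝ)
    (hC : C = sSup ((fun t => |iteratedDerivWithin 2 g (Icc 0 1) t|) '' Icc 0 1))
    (hm : m = sInf (derivWithin g (Icc 0 1) '' Icc 0 1))
    (a b c : ℝ) (hab : a < b) (hbc : b < c) (ha : 0 ≤ a) (hc : c ≤ 1)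
    (hsmall : C * (c - a) < m / 400) :
    ∃ lam : ℝ, |lam| ≤ 4 * C / m ∧
      (g c - g a) / (2 * Real.sqrt ((g c - g b) * (g b - g a))) =
        ((c - a) / (2 * Real.sqrt ((c - b) * (b - a)))) * (1 + lam * (c - a)) :=
  cross_ratio_perturbation_general g hg hg' C m hC hm a b c hab hbc ha hc
end
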